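/- arXiv:1306.2985 — 2 statements merged into one kernel-verified Lean document; each statement's English description precedes it below -/
import Mathlib

section
/- In a commutative monoid satisfying ℕ-cancellation (nα = nβ implies α = β for n ≥ 1), if (n+1)α ⪯ nα in the canonical preorder for some n ∈ ℕ, then 2α = α, i.e. α is idempotent. -/
/-!
Antisymmetry turns `(n+1)α ⪯ nα ⪯ (n+1)α` into `(n+1)α = nα`, after which the multiples of `α`
are constant from `n` on. Hence `(n+1)(2α) = (2n+2)α = (n+1)α`, and cancelling `n+1` gives `2α = α`.
-/

theorem add_nsmul_eq_of_succ_nsmul_eq {M : Type*} [AddMonoid M] {a : M} {n : ℕ}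
    (h : (n + 1) • a = n • a) (k : ℕ) : (n + k) • a = n • a := by
  induction k with
  | zero => rfl
  | succ k ih => rw [← add_assoc, succ_nsmul, ih, ← succ_nsmul, h]

/-- In a commutative monoid with ℕ-cancellation whose canonical preorder
(`α ⪯ β ↔ ∃ γ, α + γ = β`) is antisymmetric, if `(n+1)α ⪯ nα` for some `n`, then `2α = α`. -/
theorem idempotent_of_succ_smul_le {M : Type*} [AddCommMonoid M]
    (hcancel : ∀ (n : ℕ) (α β : M), 1 ≤ n → n • α = n • β → α = β)
    (hantisymm : ∀ α β : M, (∃ γ, α + γ = β) → (∃ γ, β + γ = α) → α = β)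
    (α : M) (n : ℕ) (h : ∃ γ, (n + 1) • α + γ = n • α) :
    α + α = α := by
  have hsucc : (n + 1) • α = n • α := hantisymm _ _ h ⟨α, (succ_nsmul α n).symm⟩
  refine hcancel (n + 1) _ _ (Nat.le_add_left 1 n) ?_
  calc (n + 1) • (α + α) = (n + (n + 2)) • α := by
        rw [← two_nsmul, ← mul_nsmul]
        ring_nf
    _ = n • α := add_nsmul_eq_of_succ_nsmul_eq hsucc (n + 2)
    _ = (n + 1) • α := hsucc.symm
end

section
/- For the stationarily measurable space (ℤ, ℤ², 2^ℤ) where (p,q) acts on n by n ↦ n + 2p if n is even and n ↦ n + 2q if n is odd, the type monoid is isomorphic (as an ordered commutative monoid) to (ℕ ∪ {∞})², with the type of a set P equal to (number of even elements of P)·[{0}] + (number of odd elements of P)·[{1}]. -/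
/-- A measurable action of a monoid `S` (e.g. an inverse monoid of symmetries) on a
measurable space `X`. -/
structure MAction (S X : Type) [Monoid S] [MeasurableSpace X] where
  act : S → X → X
  act_one : act 1 = id
  act_mul : ∀ s t : S, act (s * t) = act s ∘ act t
  measurable_act : ∀ s : S, Measurable (act s)

variable {S X : Type} [Monoid S] [MeasurableSpace X]

/-- An object of `𝒜̄`: a formal countable disjoint union of measurable sets, encoded as a
sequence of measurable sets. -/
def MFam (X : Type) [MeasurableSpace X] : Type := {f : ℕ → Set X // ∀ n, MeasurableSet (f n)}

/-- `h` is a countable measurable partition of each member of the family `f`. -/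
def IsPartition (f : ℕ → Set X) (h : ℕ → ℕ → Set X) : Prop :=
  (∀ n k, MeasurableSet (h n k)) ∧
  (∀ n, Pairwise (Function.onFun Disjoint (h n))) ∧
  (∀ n, (⋃ k, h n k) = f n)

/-- `(S, 𝒜̄)`-equidecomposability of formal countable disjoint unions. -/
def MEquidecomp (φ : MAction S X) (f g : MFam X) : Prop :=
  ∃ (h h' : ℕ → ℕ → Set X) (π : ℕ × ℕ ≃ ℕ × ℕ) (s t : ℕ × ℕ → S),
    IsPartition f.1 h ∧ IsPartition g.1 h' ∧
    ∀ p : ℕ × ℕ, φ.act (s p) ⁻¹' h p.1 p.2 = φ.act (t p) ⁻¹' h' (π p).1 (π p).2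

/-- The Tarski type monoid `𝒯(X,S,𝒜) = 𝒜̄ / ≂_S`. -/
def TypeMonoid (φ : MAction S X) : Type := Quot (MEquidecomp φ)

/-- The formal disjoint union consisting of a single measurable set. -/
def mfamSingle (A : Set X) (hA : MeasurableSet A) : MFam X :=
  ⟨fun n => if n = 0 then A else ∅, by
    intro n; by_cases h : n = 0 <;> simp [h, hA, MeasurableSet.empty]⟩

/-- Tarski measure: the map sending a measurable set to its equidecomposability type. -/
def tm (φ : MAction S X) (A : Set X) (hA : MeasurableSet A) : TypeMonoid φ :=
  Quot.mk _ (mfamSingle A hA)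

/-- Addition of types, `[P] + [Q] = [P ⊔ Q]`, realized by interleaving representatives. -/
noncomputable def addT (φ : MAction S X) (a b : TypeMonoid φ) : TypeMonoid φ :=
  Quot.mk _ ⟨fun n => if n % 2 = 0 then (Quot.out a).1 (n / 2) else (Quot.out b).1 (n / 2),
    by
      intro n; by_cases h : n % 2 = 0 <;> simp [h, (Quot.out a).2 _, (Quot.out b).2 _]⟩

/-- The canonical (pre)order on the type monoid. -/
noncomputable def leT (φ : MAction S X) (a b : TypeMonoid φ) : Prop :=
  ∃ c, addT φ a c = b

/-- The action of `ℤ²` on `ℤ`: `(p,q)` sends even `n` to `n + 2p` and odd `n` to `n + 2q`. -/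
noncomputable def parityAct : MAction (Multiplicative (ℤ × ℤ)) ℤ where
  act s n := if Even n then n + 2 * (Multiplicative.toAdd s).1 else n + 2 * (Multiplicative.toAdd s).2
  act_one := by
    funext n
    by_cases h : Even n <;> simp [h]
  act_mul := by
    intro s t
    funext n
    by_cases h : Even n
    · have h2 : Even (n + 2 * (Multiplicative.toAdd t).1) := by
        rcases h with ⟨k, hk⟩; exact ⟨k + (Multiplicative.toAdd t).1, by omega⟩
      simp only [Function.comp_apply, if_pos h, if_pos h2, toAdd_mul, Prod.fst_add]
      ring
    · have h2 : ¬ Even (n + 2 * (Multiplicative.toAdd t).2) := by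
        intro hc; rcases hc with ⟨k, hk⟩; exact h ⟨k - (Multiplicative.toAdd t).2, by omega⟩
      simp only [Function.comp_apply, if_neg h, if_neg h2, toAdd_mul, Prod.snd_add]
      ring
  measurable_act s := fun _ _ => trivial


/-!
The type of a formal union `⨆ fₙ` is read off from multiplicities: for `E ⊆ X`, count in `ℕ∞` the
pairs `(n, x)` with `x ∈ fₙ ∩ E`. For a group action, these counts on invariant sets (in particular
on orbits) are preserved by equidecompositions, since every piece is moved bijectively. Conversely,
if `X` is countable and the counts agree on every orbit, match the occurrences of the two unions
orbit by orbit and cut each `fₙ` into singletons: each singleton is carried onto its partner by one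
group element. The orbits of the parity action are the even and the odd integers, so the type
monoid is `ℕ∞ × ℕ∞` via (even count, odd count); this is additive because `addT` interleaves the
two families, and the orders agree because both are the algebraic preorders.
-/

open Set

namespace MAction

@[simp]
theorem act_one_apply (φ : MAction S X) (x : X) : φ.act 1 x = x := by
  rw [φ.act_one, id]

theorem act_mul_apply (φ : MAction S X) (s t : S) (x : X) :
    φ.act (s * t) x = φ.act s (φ.act t x) := by
  rw [φ.act_mul, Function.comp_apply]

variable {G : Type} [Group G] (φ : MAction G X)

@[simp]
theorem act_inv_act (g : G) (x : X) : φ.act g⁻¹ (φ.act g x) = x := by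
  rw [← act_mul_apply, inv_mul_cancel, act_one_apply]

@[simp]
theorem act_act_inv (g : G) (x : X) : φ.act g (φ.act g⁻¹ x) = x := by
  simpa using φ.act_inv_act g⁻¹ x

theorem act_injective (g : G) : Function.Injective (φ.act g) :=
  Function.LeftInverse.injective (φ.act_inv_act g)

def orbit (x : X) : Set X := range fun g => φ.act g x

theorem mem_orbit_self (x : X) : x ∈ φ.orbit x := ⟨1, φ.act_one_apply x⟩

theorem orbit_eq_of_mem {x y : X} (h : y ∈ φ.orbit x) : φ.orbit y = φ.orbit x := by
  obtain ⟨g, rfl⟩ := h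
  ext z
  constructor
  · rintro ⟨k, rfl⟩
    exact ⟨k * g, act_mul_apply ..⟩
  · rintro ⟨k, rfl⟩
    exact ⟨k * g⁻¹, by simp only [act_mul_apply, act_inv_act]⟩

theorem orbit_eq_iff {x y : X} : φ.orbit y = φ.orbit x ↔ y ∈ φ.orbit x :=
  ⟨fun h => h ▸ φ.mem_orbit_self y, φ.orbit_eq_of_mem⟩

theorem preimage_orbit (g : G) (x : X) : φ.act g ⁻¹' φ.orbit x = φ.orbit x := by
  ext z
  rw [mem_preimage, ← φ.orbit_eq_iff, ← φ.orbit_eq_iff, φ.orbit_eq_of_mem ⟨g, rfl⟩]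

end MAction

theorem Equiv.subtypeCongr_apply_of_pos {α : Type*} {p q : α → Prop} [DecidablePred p]
    [DecidablePred q] (e : {x // p x} ≃ {x // q x}) (f : {x // ¬p x} ≃ {x // ¬q x}) {a : α}
    (h : p a) : e.subtypeCongr f a = e ⟨a, h⟩ := by
  simp [Equiv.subtypeCongr, Equiv.sumCompl_symm_apply_of_pos h]

theorem Equiv.subtypeCongr_apply_of_neg {α : Type*} {p q : α → Prop} [DecidablePred p]
    [DecidablePred q] (e : {x // p x} ≃ {x // q x}) (f : {x // ¬p x} ≃ {x // ¬q x}) {a : α}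
    (h : ¬p a) : e.subtypeCongr f a = f ⟨a, h⟩ := by
  simp [Equiv.subtypeCongr, Equiv.sumCompl_symm_apply_of_neg h]

theorem nonempty_equiv_of_encard_eq {α β : Type*} [Countable α] [Countable β] {s : Set α}
    {t : Set β} (h : s.encard = t.encard) : Nonempty (s ≃ t) := by
  refine Cardinal.lift_mk_eq'.mp (Cardinal.toENat_injOn ?_ ?_ ?_)
  · simp [Cardinal.mk_le_aleph0]
  · simp [Cardinal.mk_le_aleph0]
  · rw [Cardinal.toENat_lift, Cardinal.toENat_lift]
    exact h

theorem exists_fiberwise_equiv_of_encard_eq {α β κ : Type*} [Countable α] [Countable β]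
    {s : Set α} {t : Set β} (p : α → κ) (q : β → κ)
    (h : ∀ c, (s ∩ p ⁻¹' {c}).encard = (t ∩ q ⁻¹' {c}).encard) :
    ∃ e : s ≃ t, ∀ a, q (e a) = p a := by
  have F (c : κ) : {a : s // p a = c} ≃ {b : t // q b = c} :=
    (Equiv.subtypeSubtypeEquivSubtypeInter (· ∈ s) (p · = c)).trans <|
      (nonempty_equiv_of_encard_eq (h c)).some.trans
        (Equiv.subtypeSubtypeEquivSubtypeInter (· ∈ t) (q · = c)).symm
  exact ⟨(Equiv.sigmaFiberEquiv fun a : s => p a).symm.trans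
    ((Equiv.sigmaCongrRight F).trans (Equiv.sigmaFiberEquiv fun b : t => q b)),
    fun a => (F (p a) ⟨a, rfl⟩).2⟩

def occurrences {ι α : Type*} (f : ι → Set α) (E : Set α) : Set (ι × α) := {q | q.2 ∈ f q.1 ∩ E}

theorem encard_occurrences_comp_equiv {ι κ α : Type*} (f : κ → Set α) (π : ι ≃ κ) (E : Set α) :
    (occurrences (f ∘ π) E).encard = (occurrences f E).encard := by
  have : Prod.map π id '' occurrences (f ∘ π) E = occurrences f E := by
    ext ⟨k, x⟩
    refine ⟨?_, fun hx => ⟨(π.symm k, x), by simpa [occurrences] using hx, by simp⟩⟩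
    rintro ⟨⟨i, y⟩, hy, heq⟩
    simp only [Prod.map, Prod.mk.injEq, id] at heq
    obtain ⟨rfl, rfl⟩ := heq
    exact hy
  rw [← this, (π.injective.prodMap Function.injective_id).encard_image]

theorem encard_occurrences_interleave {α : Type*} (A B : ℕ → Set α) (E : Set α) :
    (occurrences (fun n => if n % 2 = 0 then A (n / 2) else B (n / 2)) E).encard
      = (occurrences A E).encard + (occurrences B E).encard := by
  have hsplit : occurrences (fun n => if n % 2 = 0 then A (n / 2) else B (n / 2)) E
      = Prod.map (2 * ·) id '' occurrences A E ∪ Prod.map (2 * · + 1) id '' occurrences B E := by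
    ext ⟨n, x⟩
    obtain ⟨k, rfl | rfl⟩ := Nat.even_or_odd' n
    · simp [occurrences, Nat.two_mul_ne_two_mul_add_one.symm]
    · simp [occurrences, Nat.add_mod, Nat.two_mul_ne_two_mul_add_one,
        show (2 * k + 1) / 2 = k by omega]
  have hdisj : Disjoint (Prod.map (2 * ·) id '' occurrences A E)
      (Prod.map (2 * · + 1) id '' occurrences B E) := by
    rw [disjoint_left]
    rintro _ ⟨⟨m, x⟩, -, rfl⟩ ⟨⟨k, y⟩, -, h⟩
    simp only [Prod.map, Prod.mk.injEq] at h
    omega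
  have hdouble : Function.Injective (2 * · : ℕ → ℕ) := mul_right_injective₀ two_ne_zero
  have hdouble₁ : Function.Injective (2 * · + 1 : ℕ → ℕ) := (add_left_injective 1).comp hdouble
  rw [hsplit, encard_union_eq hdisj, (hdouble.prodMap Function.injective_id).encard_image,
    (hdouble₁.prodMap Function.injective_id).encard_image]

theorem encard_occurrences_single {α : Type*} (A E : Set α) :
    (occurrences (fun n => if n = 0 then A else ∅) E).encard = (A ∩ E).encard := by
  have : occurrences (fun n => if n = 0 then A else ∅) E = Prod.mk 0 '' (A ∩ E) := by
    ext ⟨n, x⟩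
    by_cases hn : n = 0 <;> simp [occurrences, hn, eq_comm]
  rw [this, (Prod.mk_right_injective 0).encard_image]

theorem encard_occurrences_of_isPartition {f : ℕ → Set X} {h : ℕ → ℕ → Set X}
    (hh : IsPartition f h) (E : Set X) :
    (occurrences (fun p : ℕ × ℕ => h p.1 p.2) E).encard = (occurrences f E).encard := by
  have hmaps : (fun q : (ℕ × ℕ) × X => (q.1.1, q.2)) '' occurrences (fun p : ℕ × ℕ => h p.1 p.2) E
      = occurrences f E := by
    ext ⟨n, x⟩
    simp only [occurrences, ← hh.2.2 n, mem_image, mem_ofPred_eq, mem_inter_iff, mem_iUnion,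
      Prod.exists, Prod.mk.injEq]
    constructor
    · rintro ⟨m, k, y, ⟨hy, hyE⟩, rfl, rfl⟩
      exact ⟨⟨k, hy⟩, hyE⟩
    · rintro ⟨⟨k, hx⟩, hxE⟩
      exact ⟨n, k, x, ⟨hx, hxE⟩, rfl, rfl⟩
  rw [← hmaps, InjOn.encard_image]
  rintro ⟨⟨n, k⟩, x⟩ ⟨hx, -⟩ ⟨⟨n', k'⟩, x'⟩ ⟨hx', -⟩ heq
  simp only [Prod.mk.injEq] at heq hx hx'
  obtain ⟨rfl, rfl⟩ := heq
  obtain rfl : k = k' := by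
    by_contra hne
    exact disjoint_left.mp (hh.2.1 n hne) hx hx'
  rfl

section Slots

variable {α : Type*} (c : α → ℕ) (f : ℕ → Set α)

/-- The point `x ∈ f n` is put alone into slot `(n, 2 * c x)`. Odd slots stay empty, so that any
two families have infinitely many empty slots to be matched with each other. -/
def slotPieces (n k : ℕ) : Set α := {x ∈ f n | 2 * c x = k}

def slotOf (q : ℕ × α) : ℕ × ℕ := (q.1, 2 * c q.2)

def occupiedSlots : Set (ℕ × ℕ) := {p | (slotPieces c f p.1 p.2).Nonempty}

variable {c}

theorem slotPieces_slotOf (hc : Function.Injective c) {q : ℕ × α} (hq : q ∈ occurrences f univ) :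
    slotPieces c f (slotOf c q).1 (slotOf c q).2 = {q.2} := by
  ext x
  simp only [slotPieces, slotOf, mem_sep_iff, mem_singleton_iff, Nat.mul_left_cancel_iff two_pos]
  refine ⟨fun ⟨_, hx⟩ => hc hx, ?_⟩
  rintro rfl
  exact ⟨hq.1, rfl⟩

theorem bijOn_slotOf (hc : Function.Injective c) :
    BijOn (slotOf c) (occurrences f univ) (occupiedSlots c f) := by
  refine ⟨fun q hq => ?_, fun q _ q' _ hqq' => ?_, fun p hp => ?_⟩
  · rw [occupiedSlots, mem_ofPred_eq, slotPieces_slotOf f hc hq]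
    exact singleton_nonempty _
  · simp only [slotOf, Prod.mk.injEq, Nat.mul_left_cancel_iff two_pos] at hqq'
    exact Prod.ext hqq'.1 (hc hqq'.2)
  · obtain ⟨x, hx, hxp⟩ := hp
    exact ⟨(p.1, x), ⟨hx, trivial⟩, Prod.ext rfl hxp⟩

theorem infinite_compl_occupiedSlots : (occupiedSlots c f)ᶜ.Infinite := by
  refine infinite_of_injective_forall_mem (f := fun n : ℕ => (n, 1)) (fun n m h => ?_) ?_
  · exact (Prod.mk.inj h).1
  · rintro n ⟨x, -, hx⟩
    omega

end Slots

theorem isPartition_slotPieces [Countable X] [MeasurableSingletonClass X] (c : X → ℕ)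
    (f : ℕ → Set X) : IsPartition f (slotPieces c f) := by
  refine ⟨fun n k => (to_countable _).measurableSet, fun n k k' hkk' => ?_, fun n => ?_⟩
  · exact disjoint_left.mpr fun x hx hx' => hkk' (hx.2.symm.trans hx'.2)
  · ext x
    simp only [slotPieces, mem_iUnion, mem_sep_iff]
    exact ⟨fun ⟨_, hx, _⟩ => hx, fun hx => ⟨_, hx, rfl⟩⟩

section GroupAction

variable {G : Type} [Group G] (φ : MAction G X)

theorem encard_occurrences_preimage_act {ι : Type*} (f : ι → Set X) (g : ι → G) {E : Set X}
    (hE : ∀ k, φ.act k ⁻¹' E = E) :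
    (occurrences (fun i => φ.act (g i) ⁻¹' f i) E).encard = (occurrences f E).encard := by
  have : (fun q : ι × X => (q.1, φ.act (g q.1) q.2)) '' occurrences (fun i => φ.act (g i) ⁻¹' f i) E
      = occurrences f E := by
    ext ⟨i, x⟩
    constructor
    · rintro ⟨⟨j, y⟩, ⟨hy, hyE⟩, heq⟩
      simp only [Prod.mk.injEq] at heq
      obtain ⟨rfl, rfl⟩ := heq
      exact ⟨hy, by rwa [← hE (g j)] at hyE⟩
    · rintro ⟨hx, hxE⟩
      rw [← hE (g i)⁻¹] at hxE
      exact ⟨(i, φ.act (g i)⁻¹ x), ⟨by simpa using hx, hxE⟩, by simp⟩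
  rw [← this, InjOn.encard_image]
  rintro ⟨i, x⟩ - ⟨j, y⟩ - heq
  simp only [Prod.mk.injEq] at heq
  obtain ⟨rfl, hxy⟩ := heq
  rw [φ.act_injective _ hxy]

theorem MEquidecomp.encard_occurrences_eq {f g : MFam X} (hfg : MEquidecomp φ f g) {E : Set X}
    (hE : ∀ k, φ.act k ⁻¹' E = E) :
    (occurrences f.1 E).encard = (occurrences g.1 E).encard := by
  obtain ⟨h, h', π, s, t, hh, hh', hst⟩ := hfg
  calc (occurrences f.1 E).encard
      = (occurrences (fun p : ℕ × ℕ => φ.act (s p) ⁻¹' h p.1 p.2) E).encard := by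
        rw [encard_occurrences_preimage_act φ _ _ hE, encard_occurrences_of_isPartition hh]
    _ = (occurrences ((fun p : ℕ × ℕ => h' p.1 p.2) ∘ π) E).encard := by
        simp_rw [hst, Function.comp_def]
        exact encard_occurrences_preimage_act φ _ _ hE
    _ = (occurrences g.1 E).encard := by
        rw [encard_occurrences_comp_equiv, encard_occurrences_of_isPartition hh']

theorem exists_equiv_occurrences_mem_orbit [Countable X] {f g : ℕ → Set X}
    (h : ∀ x, (occurrences f (φ.orbit x)).encard = (occurrences g (φ.orbit x)).encard) :
    ∃ e : occurrences f univ ≃ occurrences g univ,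
      ∀ q, (q : ℕ × X).2 ∈ φ.orbit (e q : ℕ × X).2 := by
  have fiber (F : ℕ → Set X) (x : X) :
      occurrences F univ ∩ (fun q : ℕ × X => φ.orbit q.2) ⁻¹' {φ.orbit x}
        = occurrences F (φ.orbit x) := by
    ext q
    simp [occurrences, φ.orbit_eq_iff]
  obtain ⟨e, he⟩ := exists_fiberwise_equiv_of_encard_eq (s := occurrences f univ)
    (t := occurrences g univ) (fun q => φ.orbit q.2) (fun q => φ.orbit q.2) fun c => by
      by_cases hc : ∃ x, φ.orbit x = c
      · obtain ⟨x, rfl⟩ := hc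
        rw [fiber, fiber, h]
      · have empty (F : ℕ → Set X) :
            occurrences F univ ∩ (fun q : ℕ × X => φ.orbit q.2) ⁻¹' {c} = ∅ :=
          eq_empty_of_forall_notMem fun q hq => hc ⟨q.2, hq.2⟩
        rw [empty, empty]
  exact ⟨e, fun q => φ.orbit_eq_iff.mp (he q).symm⟩

theorem mequidecomp_of_equiv_occurrences [Countable X] [MeasurableSingletonClass X]
    {f g : MFam X} (e : occurrences f.1 univ ≃ occurrences g.1 univ)
    (he : ∀ q, (q : ℕ × X).2 ∈ φ.orbit (e q : ℕ × X).2) : MEquidecomp φ f g := by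
  classical
  obtain ⟨c, hc⟩ := Countable.exists_injective_nat X
  have bij (F : ℕ → Set X) := bijOn_slotOf F hc
  obtain ⟨eEmpty⟩ : Nonempty (↥(occupiedSlots c f.1)ᶜ ≃ ↥(occupiedSlots c g.1)ᶜ) :=
    nonempty_equiv_of_encard_eq <| by
      rw [(infinite_compl_occupiedSlots f.1).encard_eq, (infinite_compl_occupiedSlots g.1).encard_eq]
  let eOccupied := (bij f.1).equiv.symm.trans (e.trans (bij g.1).equiv)
  let π := Equiv.subtypeCongr eOccupied eEmpty
  choose u hu using he
  refine ⟨slotPieces c f.1, slotPieces c g.1, π,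
    fun p => if hp : p ∈ occupiedSlots c f.1 then u ((bij f.1).equiv.symm ⟨p, hp⟩) else 1,
    fun _ => 1, isPartition_slotPieces c f.1, isPartition_slotPieces c g.1, fun p => ?_⟩
  by_cases hp : p ∈ occupiedSlots c f.1
  · set q := (bij f.1).equiv.symm ⟨p, hp⟩
    have hpq : slotOf c q = p := congrArg Subtype.val ((bij f.1).equiv.apply_symm_apply ⟨p, hp⟩)
    have hπ : π p = slotOf c (e q) := Equiv.subtypeCongr_apply_of_pos _ _ hp
    have hf : slotPieces c f.1 p.1 p.2 = {(q : ℕ × X).2} := hpq ▸ slotPieces_slotOf f.1 hc q.2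
    dsimp only
    rw [dif_pos hp, hπ, hf, slotPieces_slotOf g.1 hc (e q).2]
    ext z
    simp only [mem_preimage, mem_singleton_iff, MAction.act_one_apply, ← hu q]
    exact (φ.act_injective _).eq_iff
  · have hπ : π p ∉ occupiedSlots c g.1 :=
      Equiv.subtypeCongr_apply_of_neg eOccupied _ hp ▸ (eEmpty _).2
    rw [not_nonempty_iff_eq_empty.mp hp, not_nonempty_iff_eq_empty.mp hπ]
    rfl

theorem mequidecomp_iff_forall_encard_occurrences_orbit_eq [Countable X]
    [MeasurableSingletonClass X] {f g : MFam X} :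
    MEquidecomp φ f g ↔
      ∀ x, (occurrences f.1 (φ.orbit x)).encard = (occurrences g.1 (φ.orbit x)).encard := by
  refine ⟨fun h x => h.encard_occurrences_eq φ (φ.preimage_orbit · x), fun h => ?_⟩
  obtain ⟨e, he⟩ := exists_equiv_occurrences_mem_orbit φ h
  exact mequidecomp_of_equiv_occurrences φ e he

end GroupAction

theorem leT_iff_of_equiv {M : Type*} [AddCommMonoid M] [PartialOrder M] [CanonicallyOrderedAdd M]
    (φ : MAction S X) (Φ : TypeMonoid φ ≃ M) (hΦ : ∀ a b, Φ (addT φ a b) = Φ a + Φ b)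
    (a b : TypeMonoid φ) : leT φ a b ↔ Φ a ≤ Φ b := by
  rw [le_iff_exists_add, leT, ← Φ.exists_congr_right]
  simp only [← hΦ, Φ.apply_eq_iff_eq, eq_comm]

theorem even_parityAct_iff (s : Multiplicative (ℤ × ℤ)) (n : ℤ) :
    Even (parityAct.act s n) ↔ Even n := by
  by_cases hn : Even n <;> simp [parityAct, hn, Int.even_add, parity_simps]

theorem parityAct_orbit (n : ℤ) : parityAct.orbit n = {m | Even m ↔ Even n} := by
  ext m
  refine ⟨fun ⟨s, hs⟩ => hs ▸ even_parityAct_iff s n, fun hm => ?_⟩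
  obtain ⟨k, hk⟩ : Even (m - n) := Int.even_sub.mpr hm
  refine ⟨Multiplicative.ofAdd (k, k), ?_⟩
  by_cases hn : Even n <;> simp [parityAct, hn] <;> omega
noncomputable def parityCount (f : MFam ℤ) : ℕ∞ × ℕ∞ :=
  ((occurrences f.1 {n | Even n}).encard, (occurrences f.1 {n | Odd n}).encard)

theorem mequidecomp_parityAct_iff {f g : MFam ℤ} :
    MEquidecomp parityAct f g ↔ parityCount f = parityCount g := by
  have orbit_zero : parityAct.orbit 0 = {n | Even n} := by simp [parityAct_orbit]
  have orbit_one : parityAct.orbit 1 = {n | Odd n} := by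
    ext; simp [parityAct_orbit, Int.not_even_iff_odd]
  rw [mequidecomp_iff_forall_encard_occurrences_orbit_eq, parityCount, parityCount, Prod.ext_iff]
  refine ⟨fun h => ⟨orbit_zero ▸ h 0, orbit_one ▸ h 1⟩, fun ⟨hev, hodd⟩ n => ?_⟩
  rcases Int.even_or_odd n with hn | hn
  · rwa [parityAct.orbit_eq_of_mem (x := 0) (by simpa [orbit_zero] using hn), orbit_zero]
  · rwa [parityAct.orbit_eq_of_mem (x := 1) (by simpa [orbit_one] using hn), orbit_one]

noncomputable def parityInvariant : TypeMonoid parityAct → ℕ∞ × ℕ∞ :=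
  Quot.lift parityCount fun _ _ h => mequidecomp_parityAct_iff.mp h

theorem parityInvariant_injective : Function.Injective parityInvariant := by
  rintro ⟨f⟩ ⟨g⟩ h
  exact Quot.sound (mequidecomp_parityAct_iff.mpr h)

theorem parityInvariant_addT (a b : TypeMonoid parityAct) :
    parityInvariant (addT parityAct a b) = parityInvariant a + parityInvariant b := by
  conv_rhs => rw [← Quot.out_eq a, ← Quot.out_eq b]
  simp only [addT, parityInvariant, parityCount, encard_occurrences_interleave, Prod.mk_add_mk]

theorem parityInvariant_tm (A : Set ℤ) (hA : MeasurableSet A) :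
    parityInvariant (tm parityAct A hA) = ({n ∈ A | Even n}.encard, {n ∈ A | Odd n}.encard) := by
  simp only [tm, parityInvariant, parityCount, mfamSingle, encard_occurrences_single]
  rfl

theorem exists_encard_even_odd_eq (c : ℕ∞ × ℕ∞) :
    ∃ A : Set ℤ, ({n ∈ A | Even n}.encard, {n ∈ A | Odd n}.encard) = c := by
  have hdouble : Function.Injective (2 * · : ℤ → ℤ) := mul_right_injective₀ two_ne_zero
  obtain ⟨B, hB, hBc⟩ := exists_subset_encard_eq (s := {n : ℤ | Even n}) (k := c.1) <| by
    rw [(infinite_of_injective_forall_mem hdouble even_two_mul).encard_eq]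
    exact le_top
  obtain ⟨C, hC, hCc⟩ := exists_subset_encard_eq (s := {n : ℤ | Odd n}) (k := c.2) <| by
    rw [(infinite_of_injective_forall_mem ((add_left_injective 1).comp hdouble)
      odd_two_mul_add_one).encard_eq]
    exact le_top
  have hBC : {n ∈ B ∪ C | Even n} = B := by
    ext n
    refine ⟨fun ⟨hn, he⟩ => hn.resolve_right fun hnC => ?_, fun hn => ⟨Or.inl hn, hB hn⟩⟩
    exact Int.not_odd_iff_even.mpr he (hC hnC)
  have hCB : {n ∈ B ∪ C | Odd n} = C := by
    ext n
    refine ⟨fun ⟨hn, ho⟩ => hn.resolve_left fun hnB => ?_, fun hn => ⟨Or.inr hn, hC hn⟩⟩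
    exact Int.not_odd_iff_even.mpr (hB hnB) ho
  exact ⟨B ∪ C, by rw [hBC, hCB, hBc, hCc]⟩

theorem parityInvariant_surjective : Function.Surjective parityInvariant := fun c =>
  let ⟨A, hA⟩ := exists_encard_even_odd_eq c
  ⟨tm parityAct A (MeasurableSet.of_discrete), (parityInvariant_tm A _).trans hA⟩

/-- The type monoid of `(ℤ, ℤ², 2^ℤ)` with the parity action is isomorphic, as
an ordered commutative monoid, to `(ℕ∞)²`, with the type of a measurable set `P` given by the
pair (number of even elements of `P`, number of odd elements of `P`), i.e.
`(#evens)·[{0}] + (#odds)·[{1}]`. -/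
theorem typeMonoid_parity_example :
    ∃ Φ : TypeMonoid parityAct ≃ (ℕ∞ × ℕ∞),
      (∀ a b, Φ (addT parityAct a b) = Φ a + Φ b) ∧
      (∀ a b, leT parityAct a b ↔ Φ a ≤ Φ b) ∧
      (∀ (A : Set ℤ) (hA : MeasurableSet A),
        Φ (tm parityAct A hA) = ({n ∈ A | Even n}.encard, {n ∈ A | Odd n}.encard)) :=
  let Φ := Equiv.ofBijective parityInvariant ⟨parityInvariant_injective, parityInvariant_surjective⟩
  ⟨Φ, parityInvariant_addT, leT_iff_of_equiv parityAct Φ parityInvariant_addT,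
    parityInvariant_tm⟩
end
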